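/- arXiv:2605.13639 — 4 statements merged into one kernel-verified Lean document; each statement's English description precedes it below -/
import Mathlib

section
/- Let π be a policy, π̃ another policy, ω ∈ [0,1], and define the updated policy π' = (1-ω)π + ωπ̃ (pointwise mixture). Let Q : S × A → ℝ and set χ = ‖H Q − H_{π̃} Q‖∞. Then ‖Q* − Q^{π'}‖∞ ≤ (1 − ω(1−γ)) ‖Q* − Q^{π}‖∞ + (2ω/(1−γ)) ‖Q − Q^{π}‖∞ + (ω/(1−γ)) χ. -/
noncomputable section

/-- A policy assigns to each state a probability distribution over actions. -/
def IsPolicy {S A : Type*} [Fintype A] (π : S → A → ℝ) : Prop :=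
  (∀ s a, 0 ≤ π s a) ∧ ∀ s, ∑ a, π s a = 1

/-- A transition kernel assigns to each state-action pair a probability distribution over states. -/
def IsKernel {S A : Type*} [Fintype S] (p : S → A → S → ℝ) : Prop :=
  (∀ s a s', 0 ≤ p s a s') ∧ ∀ s a, ∑ s', p s a s' = 1

/-- Sup norm on `S × A → ℝ` (functions `S → A → ℝ`). -/
def supNorm {S A : Type*} [Fintype S] [Fintype A] [Nonempty S] [Nonempty A]
    (Q : S → A → ℝ) : ℝ :=
  Finset.univ.sup' Finset.univ_nonempty (fun sa : S × A => |Q sa.1 sa.2|)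

/-- Total variation distance between two distributions on a finite set. -/
def dTV {Ω : Type*} [Fintype Ω] (p₁ p₂ : Ω → ℝ) : ℝ :=
  (∑ x, |p₁ x - p₂ x|) / 2

/-- Weighted ℓ₂ norm with weights ν. -/
def nuNorm {S A : Type*} [Fintype S] [Fintype A] (ν : S → A → ℝ) (Q : S → A → ℝ) : ℝ :=
  Real.sqrt (∑ s, ∑ a, ν s a * (Q s a) ^ 2)

/-- Weighted ℓ₂ inner product with weights ν. -/
def nuInner {S A : Type*} [Fintype S] [Fintype A] (ν : S → A → ℝ) (Q₁ Q₂ : S → A → ℝ) : ℝ :=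
  ∑ s, ∑ a, ν s a * Q₁ s a * Q₂ s a

/-- Bellman operator associated with a policy π. -/
def bellman {S A : Type*} [Fintype S] [Fintype A]
    (p : S → A → S → ℝ) (R : S → A → ℝ) (γ : ℝ) (π : S → A → ℝ)
    (Q : S → A → ℝ) : S → A → ℝ :=
  fun s a => R s a + γ * ∑ s', p s a s' * ∑ a', π s' a' * Q s' a'

/-- Bellman optimality operator. -/
def bellmanOpt {S A : Type*} [Fintype S] [Fintype A] [Nonempty A]
    (p : S → A → S → ℝ) (R : S → A → ℝ) (γ : ℝ)
    (Q : S → A → ℝ) : S → A → ℝ :=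
  fun s a => R s a + γ * ∑ s', p s a s' *
    Finset.univ.sup' Finset.univ_nonempty (fun a' => Q s' a')

/-- Expected operator F̄(Q,π) = (I − D)Q + D H_π Q, where D has diagonal entries μ_b(s)π_b(a|s). -/
def Fbar {S A : Type*} [Fintype S] [Fintype A]
    (p : S → A → S → ℝ) (R : S → A → ℝ) (γ : ℝ)
    (μb : S → ℝ) (πb : S → A → ℝ) (π : S → A → ℝ) (Q : S → A → ℝ) : S → A → ℝ :=
  fun s a => (1 - μb s * πb s a) * Q s a + μb s * πb s a * bellman p R γ π Q s a

/-- Importance-sampling TD operator, for y = ((s₁,a₁),(s₂,a₂)). -/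
def FIS {S A : Type*} [Fintype S] [Fintype A] [DecidableEq S] [DecidableEq A]
    (R : S → A → ℝ) (γ : ℝ) (πb : S → A → ℝ)
    (Q : S → A → ℝ) (y : (S × A) × S × A) (π : S → A → ℝ) : S → A → ℝ :=
  fun s a => if (s, a) = y.1 then
      R y.1.1 y.1.2 + γ * (π y.2.1 y.2.2 / πb y.2.1 y.2.2) * Q y.2.1 y.2.2
    else Q s a

/-- Expected-TD operator, for u = (s₁,a₁,s₂). -/
def FETD {S A : Type*} [Fintype S] [Fintype A] [DecidableEq S] [DecidableEq A]
    (R : S → A → ℝ) (γ : ℝ)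
    (Q : S → A → ℝ) (u : S × A × S) (π : S → A → ℝ) : S → A → ℝ :=
  fun s a => if (s, a) = (u.1, u.2.1) then
      R u.1 u.2.1 + γ * ∑ a', π u.2.2 a' * Q u.2.2 a'
    else Q s a

/-- State transition matrix induced by a policy. -/
def Pmat {S A : Type*} [Fintype A] (p : S → A → S → ℝ) (π : S → A → ℝ) : Matrix S S ℝ :=
  Matrix.of fun s s' => ∑ a, π s a * p s a s'

end

/-! Write `ε = ‖Q - Q^π‖∞`, `e = ‖Q* - Q^π‖∞` and `δ = χ + 2γε`. Since `π̃` is greedy for `Q` up to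
`χ` and `Q` is `ε`-close to `Q^π`, `H Q^π ≤ H_{π̃} Q^π + δ`; and `H Q^π` dominates both `Q^π` and
`Q* - γe`. Monotonicity of `H_{π'}` and `H_{π'} Q^π = Q^π + ω (H_{π̃} Q^π - Q^π)` give
`Q^{π'} - Q^π ≥ γ m + ω (H_{π̃} Q^π - Q^π)` for every lower bound `m` of `Q^{π'} - Q^π`. Taking for
`m` the minimum yields `m ≥ -ωδ / (1 - γ)`, and putting this back gives
`Q* - Q^{π'} ≤ (1 - ω(1 - γ)) e + ωδ / (1 - γ)`; finally `Q^{π'} ≤ Q*`. -/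

open Finset

theorem div_one_sub_le_of_add_mul_le {ι : Type*} [Finite ι] {f : ι → ℝ} {c γ : ℝ} (hγ : γ < 1)
    (h : ∀ m, (∀ j, m ≤ f j) → ∀ i, c + γ * m ≤ f i) (i : ι) : c / (1 - γ) ≤ f i := by
  have : Nonempty ι := ⟨i⟩
  obtain ⟨i₀, hi₀⟩ := Finite.exists_min f
  calc c / (1 - γ) ≤ f i₀ := by rw [div_le_iff₀ (by linarith)]; linarith [h (f i₀) hi₀ i₀]
    _ ≤ f i := hi₀ i

theorem sum_mul_le_of_le {ι : Type*} [Fintype ι] {w x : ι → ℝ} {C : ℝ} (hw : ∀ i, 0 ≤ w i)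
    (hs : ∑ i, w i = 1) (h : ∀ i, x i ≤ C) : ∑ i, w i * x i ≤ C :=
  calc ∑ i, w i * x i ≤ ∑ i, w i * C := sum_le_sum fun i _ => mul_le_mul_of_nonneg_left (h i) (hw i)
    _ = C := by rw [← sum_mul, hs, one_mul]

theorem sum_mul_sub_sum_mul_le {ι : Type*} [Fintype ι] {w x y : ι → ℝ} {C : ℝ}
    (hw : ∀ i, 0 ≤ w i) (hs : ∑ i, w i = 1) (h : ∀ i, x i - y i ≤ C) :
    ∑ i, w i * x i - ∑ i, w i * y i ≤ C := by
  rw [← sum_sub_distrib]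
  simpa only [mul_sub] using sum_mul_le_of_le hw hs h

theorem IsPolicy.mix {S A : Type*} [Fintype A] {π πt : S → A → ℝ} (hπ : IsPolicy π)
    (hπt : IsPolicy πt) {ω : ℝ} (hω : 0 ≤ ω ∧ ω ≤ 1) :
    IsPolicy (fun s a => (1 - ω) * π s a + ω * πt s a) := by
  refine ⟨fun s a => ?_, fun s => ?_⟩
  · have := hπ.1 s a; have := hπt.1 s a; nlinarith
  · rw [sum_add_distrib, ← mul_sum, ← mul_sum, hπ.2 s, hπt.2 s]
    ring

section Supnorm

variable {S A : Type*} [Fintype S] [Fintype A] [Nonempty S] [Nonempty A]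

theorem abs_le_supNorm (f : S → A → ℝ) (s : S) (a : A) : |f s a| ≤ supNorm f :=
  le_sup' (fun sa : S × A => |f sa.1 sa.2|) (mem_univ (s, a))

theorem supNorm_le {f : S → A → ℝ} {C : ℝ} (h : ∀ s a, |f s a| ≤ C) : supNorm f ≤ C :=
  sup'_le _ _ fun sa _ => h sa.1 sa.2

end Supnorm

section Bellman

variable {S A : Type*} [Fintype S] [Fintype A] {p : S → A → S → ℝ} {R : S → A → ℝ} {γ : ℝ}

theorem bellman_sub_le (hp : IsKernel p) (hγ : 0 ≤ γ) {π : S → A → ℝ} (hπ : IsPolicy π)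
    {f g : S → A → ℝ} {C : ℝ} (h : ∀ s a, f s a - g s a ≤ C) (s : S) (a : A) :
    bellman p R γ π f s a - bellman p R γ π g s a ≤ γ * C := by
  have hnext := sum_mul_sub_sum_mul_le (hp.1 s a) (hp.2 s a)
    fun s' => sum_mul_sub_sum_mul_le (hπ.1 s') (hπ.2 s') (h s')
  calc bellman p R γ π f s a - bellman p R γ π g s a
      = γ * (∑ s', p s a s' * ∑ a', π s' a' * f s' a'
          - ∑ s', p s a s' * ∑ a', π s' a' * g s' a') := by simp only [bellman]; ring
    _ ≤ γ * C := mul_le_mul_of_nonneg_left hnext hγ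

theorem bellman_mix (ω : ℝ) (π πt f : S → A → ℝ) (s : S) (a : A) :
    bellman p R γ (fun s a => (1 - ω) * π s a + ω * πt s a) f s a
      = (1 - ω) * bellman p R γ π f s a + ω * bellman p R γ πt f s a := by
  have hinner : ∀ s', ∑ a', ((1 - ω) * π s' a' + ω * πt s' a') * f s' a'
      = (1 - ω) * ∑ a', π s' a' * f s' a' + ω * ∑ a', πt s' a' * f s' a' := fun s' => by
    simp only [add_mul, sum_add_distrib, mul_assoc, ← mul_sum]
  simp only [bellman, hinner, mul_add, sum_add_distrib, mul_left_comm _ (1 - ω),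
    mul_left_comm _ ω, ← mul_sum]
  ring

theorem mix_value_sub_ge (hp : IsKernel p) (hγ : 0 ≤ γ) {π πt : S → A → ℝ} (hπ : IsPolicy π)
    (hπt : IsPolicy πt) {ω : ℝ} (hω : 0 ≤ ω ∧ ω ≤ 1) {V V' : S → A → ℝ}
    (hV : bellman p R γ π V = V)
    (hV' : bellman p R γ (fun s a => (1 - ω) * π s a + ω * πt s a) V' = V') {m : ℝ}
    (hm : ∀ s a, m ≤ V' s a - V s a) (s : S) (a : A) :
    γ * m + ω * (bellman p R γ πt V s a - V s a) ≤ V' s a - V s a := by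
  have hshift := bellman_sub_le (R := R) hp hγ (hπ.mix hπt hω) (f := V) (g := V') (C := -m)
    (fun s a => by linarith [hm s a]) s a
  rw [bellman_mix, congrFun₂ hV, congrFun₂ hV'] at hshift
  linarith

variable [Nonempty A]

theorem bellmanOpt_sub_le (hp : IsKernel p) (hγ : 0 ≤ γ) {f g : S → A → ℝ} {C : ℝ}
    (h : ∀ s a, f s a - g s a ≤ C) (s : S) (a : A) :
    bellmanOpt p R γ f s a - bellmanOpt p R γ g s a ≤ γ * C := by
  have hmax : ∀ s', univ.sup' univ_nonempty (f s') - univ.sup' univ_nonempty (g s') ≤ C :=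
    fun s' => sub_le_iff_le_add.2 <| sup'_le _ _ fun a' _ => by
      linarith [h s' a', le_sup' (g s') (mem_univ a')]
  have hnext := sum_mul_sub_sum_mul_le (hp.1 s a) (hp.2 s a) hmax
  calc bellmanOpt p R γ f s a - bellmanOpt p R γ g s a
      = γ * (∑ s', p s a s' * univ.sup' univ_nonempty (f s')
          - ∑ s', p s a s' * univ.sup' univ_nonempty (g s')) := by simp only [bellmanOpt]; ring
    _ ≤ γ * C := mul_le_mul_of_nonneg_left hnext hγ

theorem bellman_le_bellmanOpt (hp : IsKernel p) (hγ : 0 ≤ γ) {π : S → A → ℝ} (hπ : IsPolicy π)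
    (f : S → A → ℝ) (s : S) (a : A) : bellman p R γ π f s a ≤ bellmanOpt p R γ f s a := by
  have hmean : ∀ s', ∑ a', π s' a' * f s' a' ≤ univ.sup' univ_nonempty (f s') := fun s' =>
    sum_mul_le_of_le (x := f s') (hπ.1 s') (hπ.2 s') fun a' => le_sup' (f s') (mem_univ a')
  have hnext := sum_mul_sub_sum_mul_le (C := 0) (hp.1 s a) (hp.2 s a)
    (y := fun s' => univ.sup' univ_nonempty (f s')) fun s' => sub_nonpos.2 (hmean s')
  have := mul_le_mul_of_nonneg_left hnext hγ
  simp only [bellman, bellmanOpt]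
  linarith

theorem value_le_optimal (hp : IsKernel p) (hγ₀ : 0 ≤ γ) (hγ₁ : γ < 1) {π : S → A → ℝ}
    (hπ : IsPolicy π) {V Qstar : S → A → ℝ} (hV : bellman p R γ π V = V)
    (hQstar : bellmanOpt p R γ Qstar = Qstar) (s : S) (a : A) : V s a ≤ Qstar s a := by
  have key : ∀ m, (∀ x : S × A, m ≤ Qstar x.1 x.2 - V x.1 x.2) →
      ∀ x : S × A, 0 + γ * m ≤ Qstar x.1 x.2 - V x.1 x.2 := by
    intro m hm ⟨s, a⟩
    have hshift := bellman_sub_le (R := R) hp hγ₀ hπ (f := V) (g := Qstar) (C := -m)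
      (fun s a => by linarith [hm (s, a)]) s a
    have hopt := bellman_le_bellmanOpt (R := R) hp hγ₀ hπ Qstar s a
    rw [congrFun₂ hV] at hshift
    rw [congrFun₂ hQstar] at hopt
    linarith
  simpa using div_one_sub_le_of_add_mul_le hγ₁ key (s, a)

theorem bellmanOpt_le_bellman_add (hp : IsKernel p) (hγ : 0 ≤ γ) {πt : S → A → ℝ}
    (hπt : IsPolicy πt) {Q V : S → A → ℝ} {ε χ : ℝ} (hε : ∀ s a, |Q s a - V s a| ≤ ε)
    (hχ : ∀ s a, |bellmanOpt p R γ Q s a - bellman p R γ πt Q s a| ≤ χ) (s : S) (a : A) :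
    bellmanOpt p R γ V s a ≤ bellman p R γ πt V s a + (χ + 2 * γ * ε) := by
  have hVQ := bellmanOpt_sub_le (R := R) hp hγ (f := V) (g := Q) (C := ε)
    (fun s a => by linarith [abs_le.1 (hε s a)]) s a
  have hQV := bellman_sub_le (R := R) hp hγ hπt (f := Q) (g := V) (C := ε)
    (fun s a => by linarith [abs_le.1 (hε s a)]) s a
  linarith [abs_le.1 (hχ s a)]

theorem mix_value_sub_ge_of_bellmanOpt_le (hp : IsKernel p) (hγ₀ : 0 ≤ γ) (hγ₁ : γ < 1)
    {π πt : S → A → ℝ} (hπ : IsPolicy π) (hπt : IsPolicy πt) {ω : ℝ} (hω : 0 ≤ ω ∧ ω ≤ 1)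
    {V V' : S → A → ℝ} (hV : bellman p R γ π V = V)
    (hV' : bellman p R γ (fun s a => (1 - ω) * π s a + ω * πt s a) V' = V') {δ : ℝ}
    (hgreedy : ∀ s a, bellmanOpt p R γ V s a ≤ bellman p R γ πt V s a + δ) (s : S) (a : A) :
    -(ω * δ) / (1 - γ) ≤ V' s a - V s a := by
  refine div_one_sub_le_of_add_mul_le (f := fun x : S × A => V' x.1 x.2 - V x.1 x.2) hγ₁
    (fun m hm x => ?_) (s, a)
  have hdrift := mix_value_sub_ge hp hγ₀ hπ hπt hω hV hV' (fun s a => hm (s, a)) x.1 x.2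
  have hV_le := bellman_le_bellmanOpt (R := R) hp hγ₀ hπ V x.1 x.2
  rw [congrFun₂ hV] at hV_le
  nlinarith [hgreedy x.1 x.2, hω.1]

theorem optimal_sub_mix_value_le (hp : IsKernel p) (hγ₀ : 0 ≤ γ) (hγ₁ : γ < 1)
    {π πt : S → A → ℝ} (hπ : IsPolicy π) (hπt : IsPolicy πt) {ω : ℝ} (hω : 0 ≤ ω ∧ ω ≤ 1)
    {Qstar V V' : S → A → ℝ} (hQstar : bellmanOpt p R γ Qstar = Qstar)
    (hV : bellman p R γ π V = V)
    (hV' : bellman p R γ (fun s a => (1 - ω) * π s a + ω * πt s a) V' = V') {δ e : ℝ}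
    (hgreedy : ∀ s a, bellmanOpt p R γ V s a ≤ bellman p R γ πt V s a + δ)
    (he : ∀ s a, |Qstar s a - V s a| ≤ e) (s : S) (a : A) :
    Qstar s a - V' s a ≤ (1 - ω * (1 - γ)) * e + ω * δ / (1 - γ) := by
  have hstar := bellmanOpt_sub_le (R := R) hp hγ₀ (f := Qstar) (g := V) (C := e)
    (fun s a => (le_abs_self _).trans (he s a)) s a
  rw [congrFun₂ hQstar] at hstar
  have hdrift := mix_value_sub_ge hp hγ₀ hπ hπt hω hV hV'
    (mix_value_sub_ge_of_bellmanOpt_le hp hγ₀ hγ₁ hπ hπt hω hV hV' hgreedy) s a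
  rw [neg_div] at hdrift
  calc Qstar s a - V' s a
      ≤ (1 - ω) * (Qstar s a - V s a) + γ * ω * e + ω * δ + γ * (ω * δ / (1 - γ)) := by
        nlinarith [hgreedy s a, hω.1]
    _ ≤ (1 - ω) * e + γ * ω * e + ω * δ + γ * (ω * δ / (1 - γ)) := by
        gcongr
        · linarith [hω.2]
        · exact (abs_le.1 (he s a)).2
    _ = (1 - ω * (1 - γ)) * e + ω * δ / (1 - γ) := by
        field_simp [(sub_pos.2 hγ₁).ne']
        ring

end Bellman

theorem actor_drift_general {S A : Type*} [Fintype S] [Fintype A] [Nonempty S] [Nonempty A]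
    (p : S → A → S → ℝ) (hp : IsKernel p)
    (R : S → A → ℝ)
    (γ : ℝ) (hγ : 0 < γ ∧ γ < 1)
    (π πt : S → A → ℝ) (hπ : IsPolicy π) (hπt : IsPolicy πt)
    (ω : ℝ) (hω : 0 ≤ ω ∧ ω ≤ 1)
    (Q Qstar Qpi Qpi' : S → A → ℝ)
    (hQstar : bellmanOpt p R γ Qstar = Qstar)
    (hQpi : bellman p R γ π Qpi = Qpi)
    (hQpi' : bellman p R γ (fun s a => (1 - ω) * π s a + ω * πt s a) Qpi' = Qpi')
    (χ : ℝ)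
    (hχ : χ = supNorm (fun s a => bellmanOpt p R γ Q s a - bellman p R γ πt Q s a)) :
    supNorm (fun s a => Qstar s a - Qpi' s a)
      ≤ (1 - ω * (1 - γ)) * supNorm (fun s a => Qstar s a - Qpi s a)
        + (2 * ω / (1 - γ)) * supNorm (fun s a => Q s a - Qpi s a)
        + (ω / (1 - γ)) * χ := by
  obtain ⟨hγ₀, hγ₁⟩ := hγ
  set ε := supNorm (fun s a => Q s a - Qpi s a)
  have hε : ∀ s a, |Q s a - Qpi s a| ≤ ε := abs_le_supNorm (fun s a => Q s a - Qpi s a)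
  have hgreedy := bellmanOpt_le_bellman_add hp hγ₀.le hπt hε
    (hχ ▸ abs_le_supNorm (fun s a => bellmanOpt p R γ Q s a - bellman p R γ πt Q s a))
  refine supNorm_le fun s a => ?_
  rw [abs_of_nonneg (sub_nonneg.2
    (value_le_optimal hp hγ₀.le hγ₁ (hπ.mix hπt hω) hQpi' hQstar s a))]
  have hε₀ : 0 ≤ ε := (abs_nonneg _).trans (hε s a)
  calc Qstar s a - Qpi' s a
      ≤ (1 - ω * (1 - γ)) * supNorm (fun s a => Qstar s a - Qpi s a)
        + ω * (χ + 2 * γ * ε) / (1 - γ) :=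
        optimal_sub_mix_value_le hp hγ₀.le hγ₁ hπ hπt hω hQstar hQpi hQpi' hgreedy
          (abs_le_supNorm (fun s a => Qstar s a - Qpi s a)) s a
    _ ≤ (1 - ω * (1 - γ)) * supNorm (fun s a => Qstar s a - Qpi s a)
        + ω * (χ + 2 * ε) / (1 - γ) := by
        gcongr
        · linarith
        · nlinarith
    _ = _ := by ring

/-- One-step actor drift inequality (Proposition 3.1). -/
theorem actor_drift {S A : Type*} [Fintype S] [Fintype A] [Nonempty S] [Nonempty A]
    (p : S → A → S → ℝ) (hp : IsKernel p)
    (R : S → A → ℝ) (hR : ∀ s a, 0 ≤ R s a ∧ R s a ≤ 1)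
    (γ : ℝ) (hγ : 0 < γ ∧ γ < 1)
    (π πt : S → A → ℝ) (hπ : IsPolicy π) (hπt : IsPolicy πt)
    (ω : ℝ) (hω : 0 ≤ ω ∧ ω ≤ 1)
    (Q Qstar Qpi Qpi' : S → A → ℝ)
    (hQstar : bellmanOpt p R γ Qstar = Qstar)
    (hQpi : bellman p R γ π Qpi = Qpi)
    (hQpi' : bellman p R γ (fun s a => (1 - ω) * π s a + ω * πt s a) Qpi' = Qpi')
    (χ : ℝ)
    (hχ : χ = supNorm (fun s a => bellmanOpt p R γ Q s a - bellman p R γ πt Q s a)) :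
    supNorm (fun s a => Qstar s a - Qpi' s a)
      ≤ (1 - ω * (1 - γ)) * supNorm (fun s a => Qstar s a - Qpi s a)
        + (2 * ω / (1 - γ)) * supNorm (fun s a => Q s a - Qpi s a)
        + (ω / (1 - γ)) * χ :=
  actor_drift_general p hp R γ hγ π πt hπ hπt ω hω Q Qstar Qpi Qpi' hQstar hQpi hQpi' χ hχ
end

section
/- Let π be a policy, π̃ another policy, ω ∈ [0,1], and define π' = (1-ω)π + ωπ̃. Let Q : S × A → ℝ, χ = ‖H Q − H_{π̃} Q‖∞, and δ = max_{(s,a)} (Q^{π}(s,a) − Q^{π'}(s,a)). Then δ ≤ ω (2γ ‖Q − Q^{π}‖∞ + χ) / (1−γ). In particular, if Q = Q^{π} and χ = 0 then Q^{π'} ≥ Q^{π} entry-wise (monotonic policy improvement). -/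
private lemma sum_weighted_le {A : Type*} [Fintype A] (w f : A → ℝ) (c : ℝ)
    (hw : ∀ a, 0 ≤ w a) (hs : ∑ a, w a = 1) (hf : ∀ a, f a ≤ c) :
    ∑ a, w a * f a ≤ c := by
  calc ∑ a, w a * f a ≤ ∑ a, w a * c :=
        Finset.sum_le_sum fun a _ => mul_le_mul_of_nonneg_left (hf a) (hw a)
    _ = c := by rw [← Finset.sum_mul, hs, one_mul]

/-- Approximate monotonic policy improvement. -/
theorem approx_monotonic_improvement {S A : Type*} [Fintype S] [Fintype A] [Nonempty S] [Nonempty A]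
    (p : S → A → S → ℝ) (hp : IsKernel p)
    (R : S → A → ℝ) (hR : ∀ s a, 0 ≤ R s a ∧ R s a ≤ 1)
    (γ : ℝ) (hγ : 0 < γ ∧ γ < 1)
    (π πt : S → A → ℝ) (hπ : IsPolicy π) (hπt : IsPolicy πt)
    (ω : ℝ) (hω : 0 ≤ ω ∧ ω ≤ 1)
    (Q Qstar Qpi Qpi' : S → A → ℝ)
    (hQstar : bellmanOpt p R γ Qstar = Qstar)
    (hQpi : bellman p R γ π Qpi = Qpi)
    (hQpi' : bellman p R γ (fun s a => (1 - ω) * π s a + ω * πt s a) Qpi' = Qpi')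
    (χ : ℝ)
    (hχ : χ = supNorm (fun s a => bellmanOpt p R γ Q s a - bellman p R γ πt Q s a))
    (δ : ℝ)
    (hδ : δ = Finset.univ.sup' Finset.univ_nonempty
      (fun sa : S × A => Qpi sa.1 sa.2 - Qpi' sa.1 sa.2)) :
    δ ≤ ω * (2 * γ * supNorm (fun s a => Q s a - Qpi s a) + χ) / (1 - γ)
    ∧ ((Q = Qpi ∧ χ = 0) → ∀ s a, Qpi s a ≤ Qpi' s a) := by
  obtain ⟨hγ0, hγ1⟩ := hγ
  obtain ⟨hω0, hω1⟩ := hω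
  obtain ⟨hp0, hp1⟩ := hp
  obtain ⟨hπ0, hπ1⟩ := hπ
  obtain ⟨hπt0, hπt1⟩ := hπt
  set π' : S → A → ℝ := fun s a => (1 - ω) * π s a + ω * πt s a with hπ'def
  have hπ'0 : ∀ s a, 0 ≤ π' s a := fun s a => by
    have := hπ0 s a; have := hπt0 s a; simp only [hπ'def]; nlinarith
  have hπ'1 : ∀ s, ∑ a, π' s a = 1 := fun s => by
    simp only [hπ'def, Finset.sum_add_distrib, ← Finset.mul_sum, hπ1 s, hπt1 s]; ring
  set ε := supNorm (fun s a => Q s a - Qpi s a) with hε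
  have habs : ∀ s a, |Q s a - Qpi s a| ≤ ε := fun s a =>
    Finset.le_sup' (fun sa : S × A => |Q sa.1 sa.2 - Qpi sa.1 sa.2|) (Finset.mem_univ (s, a))
  have hε0 : 0 ≤ ε := by
    obtain ⟨s⟩ := (inferInstance : Nonempty S)
    obtain ⟨a⟩ := (inferInstance : Nonempty A)
    exact le_trans (abs_nonneg _) (habs s a)
  have hδub : ∀ s a, Qpi s a - Qpi' s a ≤ δ := fun s a => by
    rw [hδ]
    exact Finset.le_sup' (fun sa : S × A => Qpi sa.1 sa.2 - Qpi' sa.1 sa.2)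
      (Finset.mem_univ (s, a))
  have hχb : ∀ s a, bellmanOpt p R γ Q s a - bellman p R γ πt Q s a ≤ χ := fun s a => by
    rw [hχ]
    exact le_trans (le_abs_self _)
      (Finset.le_sup' (fun sa : S × A =>
        |bellmanOpt p R γ Q sa.1 sa.2 - bellman p R γ πt Q sa.1 sa.2|) (Finset.mem_univ (s, a)))
  set M : S → ℝ := fun s' => Finset.univ.sup' Finset.univ_nonempty (fun a' => Q s' a') with hM
  set g : S → ℝ := fun s' => M s' - ∑ a', πt s' a' * Q s' a' with hg
  -- χ bounds the kernel-averaged gap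
  have key : ∀ s a, γ * ∑ s', p s a s' * g s' ≤ χ := by
    intro s a
    have : bellmanOpt p R γ Q s a - bellman p R γ πt Q s a
        = γ * ∑ s', p s a s' * g s' := by
      simp only [bellmanOpt, bellman, hg, hM]
      rw [show (∑ s', p s a s' * ((Finset.univ.sup' Finset.univ_nonempty fun a' => Q s' a')
          - ∑ a', πt s' a' * Q s' a'))
        = (∑ s', p s a s' * (Finset.univ.sup' Finset.univ_nonempty fun a' => Q s' a'))
          - ∑ s', p s a s' * ∑ a', πt s' a' * Q s' a' from by
          rw [← Finset.sum_sub_distrib]; exact Finset.sum_congr rfl fun _ _ => by ring]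
      ring
    rw [← this]; exact hχb s a
  -- per-state estimate
  have main : ∀ s', (∑ a', π s' a' * Qpi s' a') - (∑ a', π' s' a' * Qpi' s' a')
      ≤ ω * (2 * ε + g s') + δ := by
    intro s'
    have b1 : ∑ a', π' s' a' * (Qpi s' a' - Qpi' s' a') ≤ δ :=
      sum_weighted_le _ _ _ (hπ'0 s') (hπ'1 s') (fun a' => hδub s' a')
    have b2 : ∑ a', π s' a' * (Qpi s' a' - Q s' a') ≤ ε :=
      sum_weighted_le _ _ _ (hπ0 s') (hπ1 s') (fun a' => by
        have := abs_le.mp (habs s' a'); linarith [this.1])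
    have b3 : ∑ a', πt s' a' * (Q s' a' - Qpi s' a') ≤ ε :=
      sum_weighted_le _ _ _ (hπt0 s') (hπt1 s') (fun a' => by
        have := abs_le.mp (habs s' a'); linarith [this.2])
    have b4 : ∑ a', π s' a' * Q s' a' ≤ M s' :=
      sum_weighted_le _ _ _ (hπ0 s') (hπ1 s') (fun a' =>
        Finset.le_sup' (fun a' => Q s' a') (Finset.mem_univ a'))
    have e2 : ∑ a', π s' a' * (Qpi s' a' - Q s' a')
        = (∑ a', π s' a' * Qpi s' a') - ∑ a', π s' a' * Q s' a' := by
      rw [← Finset.sum_sub_distrib]; exact Finset.sum_congr rfl fun _ _ => by ring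
    have e3 : ∑ a', πt s' a' * (Q s' a' - Qpi s' a')
        = (∑ a', πt s' a' * Q s' a') - ∑ a', πt s' a' * Qpi s' a' := by
      rw [← Finset.sum_sub_distrib]; exact Finset.sum_congr rfl fun _ _ => by ring
    have b5 : (∑ a', π s' a' * Qpi s' a') - (∑ a', πt s' a' * Qpi s' a')
        ≤ 2 * ε + g s' := by
      have hgs : g s' = M s' - ∑ a', πt s' a' * Q s' a' := rfl
      rw [e2] at b2; rw [e3] at b3; rw [hgs]; linarith
    have id1 : (∑ a', π s' a' * Qpi s' a') - (∑ a', π' s' a' * Qpi' s' a')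
        = ω * ((∑ a', π s' a' * Qpi s' a') - (∑ a', πt s' a' * Qpi s' a'))
          + ∑ a', π' s' a' * (Qpi s' a' - Qpi' s' a') := by
      simp only [hπ'def, mul_sub, Finset.mul_sum, ← Finset.sum_sub_distrib,
        ← Finset.sum_add_distrib]
      exact Finset.sum_congr rfl fun _ _ => by ring
    have b6 : ω * ((∑ a', π s' a' * Qpi s' a') - (∑ a', πt s' a' * Qpi s' a'))
        ≤ ω * (2 * ε + g s') := mul_le_mul_of_nonneg_left b5 hω0
    rw [id1]; linarith
  -- the recursive inequality for δ
  obtain ⟨sa, -, hsa⟩ := Finset.exists_mem_eq_sup' (Finset.univ_nonempty (α := S × A))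
    (fun sa : S × A => Qpi sa.1 sa.2 - Qpi' sa.1 sa.2)
  have hδeq : δ = Qpi sa.1 sa.2 - Qpi' sa.1 sa.2 := by rw [hδ, hsa]
  have fp : Qpi sa.1 sa.2 - Qpi' sa.1 sa.2
      = γ * ∑ s', p sa.1 sa.2 s' *
          ((∑ a', π s' a' * Qpi s' a') - (∑ a', π' s' a' * Qpi' s' a')) := by
    conv_lhs => rw [← hQpi, ← hQpi']
    simp only [bellman]
    rw [show (∑ s', p sa.1 sa.2 s' *
          ((∑ a', π s' a' * Qpi s' a') - (∑ a', π' s' a' * Qpi' s' a')))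
        = (∑ s', p sa.1 sa.2 s' * ∑ a', π s' a' * Qpi s' a')
          - ∑ s', p sa.1 sa.2 s' * ∑ a', π' s' a' * Qpi' s' a' from by
        rw [← Finset.sum_sub_distrib]; exact Finset.sum_congr rfl fun _ _ => by ring]
    simp only [hπ'def]
    ring
  have step : (∑ s', p sa.1 sa.2 s' *
        ((∑ a', π s' a' * Qpi s' a') - (∑ a', π' s' a' * Qpi' s' a')))
      ≤ ω * 2 * ε + ω * (∑ s', p sa.1 sa.2 s' * g s') + δ := by
    calc (∑ s', p sa.1 sa.2 s' *
          ((∑ a', π s' a' * Qpi s' a') - (∑ a', π' s' a' * Qpi' s' a')))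
        ≤ ∑ s', p sa.1 sa.2 s' * (ω * (2 * ε + g s') + δ) :=
          Finset.sum_le_sum fun s' _ =>
            mul_le_mul_of_nonneg_left (main s') (hp0 sa.1 sa.2 s')
      _ = ω * 2 * ε * (∑ s', p sa.1 sa.2 s') + ω * (∑ s', p sa.1 sa.2 s' * g s')
          + δ * (∑ s', p sa.1 sa.2 s') := by
          rw [Finset.mul_sum, Finset.mul_sum, Finset.mul_sum, ← Finset.sum_add_distrib,
            ← Finset.sum_add_distrib]
          exact Finset.sum_congr rfl fun _ _ => by ring
      _ = ω * 2 * ε + ω * (∑ s', p sa.1 sa.2 s' * g s') + δ := by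
          rw [hp1 sa.1 sa.2]; ring
  have hT : γ * (∑ s', p sa.1 sa.2 s' * g s') ≤ χ := key sa.1 sa.2
  have hrec : δ ≤ 2 * ω * γ * ε + ω * χ + γ * δ := by
    have hδγ : δ = γ * ∑ s', p sa.1 sa.2 s' *
        ((∑ a', π s' a' * Qpi s' a') - (∑ a', π' s' a' * Qpi' s' a')) := by
      rw [hδeq, fp]
    have h1 : δ ≤ γ * (ω * 2 * ε + ω * (∑ s', p sa.1 sa.2 s' * g s') + δ) :=
      calc δ = γ * ∑ s', p sa.1 sa.2 s' *
            ((∑ a', π s' a' * Qpi s' a') - (∑ a', π' s' a' * Qpi' s' a')) := hδγ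
        _ ≤ γ * (ω * 2 * ε + ω * (∑ s', p sa.1 sa.2 s' * g s') + δ) :=
            mul_le_mul_of_nonneg_left step (le_of_lt hγ0)
    nlinarith [mul_le_mul_of_nonneg_left hT hω0]
  have hfirst : δ ≤ ω * (2 * γ * ε + χ) / (1 - γ) := by
    rw [le_div_iff₀ (by linarith : (0:ℝ) < 1 - γ)]
    nlinarith
  refine ⟨hfirst, ?_⟩
  rintro ⟨hQeq, hχ0⟩ s a
  have hεz : ε = 0 := by
    rw [hε, hQeq, supNorm]
    simp
  have : δ ≤ 0 := by
    rw [hεz, hχ0] at hfirst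
    simpa using hfirst
  linarith [hδub s a]
end

section
/- Let {π_t} be a sequence of policies satisfying π_{t+1} = (1-ω_t)π_t + ω_t π̃_t for some policies π̃_t and stepsizes ω_t ∈ [0,1]. Then for all nonnegative integers t₁ < t₂ and all Q : S × A → ℝ, ‖F̄(Q, π_{t₁}) − F̄(Q, π_{t₂})‖∞ ≤ 2 (Σ_{u=t₁}^{t₂−1} ω_u) ‖Q‖∞. -/
/-- Policy-perturbation bound for the expected operator F̄ (Lemma 3.2, part 3). -/
theorem Fbar_policy_perturbation {S A : Type*} [Fintype S] [Fintype A] [Nonempty S] [Nonempty A]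
    (p : S → A → S → ℝ) (hp : IsKernel p)
    (R : S → A → ℝ) (hR : ∀ s a, 0 ≤ R s a ∧ R s a ≤ 1)
    (γ : ℝ) (hγ : 0 < γ ∧ γ < 1)
    (πb : S → A → ℝ) (hπb : IsPolicy πb) (hπbpos : ∀ s a, 0 < πb s a)
    (μb : S → ℝ) (hμbpos : ∀ s, 0 < μb s) (hμbsum : ∑ s, μb s = 1)
    (hstat : ∀ s' : S, ∑ s, μb s * ∑ a, πb s a * p s a s' = μb s')
    (π πt : ℕ → S → A → ℝ) (ω : ℕ → ℝ)
    (hπ : ∀ t, IsPolicy (π t)) (hπt : ∀ t, IsPolicy (πt t))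
    (hω : ∀ t, 0 ≤ ω t ∧ ω t ≤ 1)
    (hupd : ∀ t s a, π (t + 1) s a = (1 - ω t) * π t s a + ω t * πt t s a)
    (t₁ t₂ : ℕ) (h : t₁ < t₂) (Q : S → A → ℝ) :
    supNorm (fun s a => Fbar p R γ μb πb (π t₁) Q s a - Fbar p R γ μb πb (π t₂) Q s a)
      ≤ 2 * (∑ u ∈ Finset.Ico t₁ t₂, ω u) * supNorm Q := by
  obtain ⟨hγ0, hγ1⟩ := hγ
  have hQbd : ∀ s a, |Q s a| ≤ supNorm Q := fun s a =>
    Finset.le_sup' (fun sa : S × A => |Q sa.1 sa.2|) (Finset.mem_univ (s, a))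
  obtain ⟨s₀⟩ := ‹Nonempty S›
  obtain ⟨a₀⟩ := ‹Nonempty A›
  have hQ0 : 0 ≤ supNorm Q := le_trans (abs_nonneg (Q s₀ a₀)) (hQbd s₀ a₀)
  have hW0 : 0 ≤ ∑ u ∈ Finset.Ico t₁ t₂, ω u := Finset.sum_nonneg fun u _ => (hω u).1
  have key : ∀ n, t₁ ≤ n → ∀ s', ∑ a', |π t₁ s' a' - π n s' a'|
      ≤ 2 * ∑ u ∈ Finset.Ico t₁ n, ω u := by
    intro n hn
    induction n, hn using Nat.le_induction with
    | base => intro s'; simp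
    | succ n hn ih =>
      intro s'
      have step : ∀ a' : A, |π n s' a' - π (n + 1) s' a'| = ω n * |π n s' a' - πt n s' a'| := by
        intro a'
        have heq : π n s' a' - π (n + 1) s' a' = ω n * (π n s' a' - πt n s' a') := by
          rw [hupd n s' a']; ring
        rw [heq, abs_mul, abs_of_nonneg (hω n).1]
      calc ∑ a', |π t₁ s' a' - π (n + 1) s' a'|
          ≤ ∑ a', (|π t₁ s' a' - π n s' a'| + |π n s' a' - π (n + 1) s' a'|) :=
            Finset.sum_le_sum fun a' _ => abs_sub_le _ _ _
        _ = (∑ a', |π t₁ s' a' - π n s' a'|) + ∑ a', |π n s' a' - π (n + 1) s' a'| :=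
            Finset.sum_add_distrib
        _ ≤ 2 * (∑ u ∈ Finset.Ico t₁ n, ω u) + ω n * 2 := by
            refine add_le_add (ih s') ?_
            have h1 : ∑ a', |π n s' a' - π (n + 1) s' a'|
                = ω n * ∑ a', |π n s' a' - πt n s' a'| := by
              rw [Finset.mul_sum]
              exact Finset.sum_congr rfl fun a' _ => step a'
            rw [h1]
            refine mul_le_mul_of_nonneg_left ?_ (hω n).1
            calc ∑ a', |π n s' a' - πt n s' a'|
                ≤ ∑ a', (π n s' a' + πt n s' a') := by
                  refine Finset.sum_le_sum fun a' _ => ?_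
                  have := abs_add_le (π n s' a') (-(πt n s' a'))
                  simp only [sub_eq_add_neg, abs_neg] at this ⊢
                  calc |π n s' a' + -πt n s' a'| ≤ |π n s' a'| + |πt n s' a'| := this
                    _ = π n s' a' + πt n s' a' := by
                        rw [abs_of_nonneg ((hπ n).1 s' a'), abs_of_nonneg ((hπt n).1 s' a')]
              _ = 2 := by
                  rw [Finset.sum_add_distrib, (hπ n).2 s', (hπt n).2 s']; norm_num
        _ = 2 * ∑ u ∈ Finset.Ico t₁ (n + 1), ω u := by
            rw [Finset.sum_Ico_succ_top hn]; ring
  have key2 := key t₂ h.le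
  set W := ∑ u ∈ Finset.Ico t₁ t₂, ω u with hWdef
  apply Finset.sup'_le
  rintro ⟨s, a⟩ -
  simp only
  have hsum : ∑ s', p s a s' * ∑ a', (π t₁ s' a' - π t₂ s' a') * Q s' a'
      = (∑ s', p s a s' * ∑ a', π t₁ s' a' * Q s' a')
        - ∑ s', p s a s' * ∑ a', π t₂ s' a' * Q s' a' := by
    rw [← Finset.sum_sub_distrib]
    refine Finset.sum_congr rfl fun s' _ => ?_
    rw [← mul_sub, ← Finset.sum_sub_distrib]
    congr 1
    exact Finset.sum_congr rfl fun a' _ => by ring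
  have hdiff : Fbar p R γ μb πb (π t₁) Q s a - Fbar p R γ μb πb (π t₂) Q s a
      = μb s * πb s a * γ * ∑ s', p s a s' * ∑ a', (π t₁ s' a' - π t₂ s' a') * Q s' a' := by
    simp only [Fbar, bellman]
    rw [hsum]
    ring
  rw [hdiff]
  have hinner : ∀ s' : S, |∑ a', (π t₁ s' a' - π t₂ s' a') * Q s' a'|
      ≤ 2 * W * supNorm Q := by
    intro s'
    calc |∑ a', (π t₁ s' a' - π t₂ s' a') * Q s' a'|
        ≤ ∑ a', |(π t₁ s' a' - π t₂ s' a') * Q s' a'| := Finset.abs_sum_le_sum_abs _ _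
      _ = ∑ a', |π t₁ s' a' - π t₂ s' a'| * |Q s' a'| := by
          exact Finset.sum_congr rfl fun a' _ => abs_mul _ _
      _ ≤ ∑ a', |π t₁ s' a' - π t₂ s' a'| * supNorm Q :=
          Finset.sum_le_sum fun a' _ =>
            mul_le_mul_of_nonneg_left (hQbd s' a') (abs_nonneg _)
      _ = (∑ a', |π t₁ s' a' - π t₂ s' a'|) * supNorm Q := by rw [Finset.sum_mul]
      _ ≤ 2 * W * supNorm Q := mul_le_mul_of_nonneg_right (key2 s') hQ0
  have hd0 : 0 ≤ μb s * πb s a := mul_nonneg (hμbpos s).le (hπbpos s a).le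
  have hd1 : μb s * πb s a ≤ 1 := by
    have hμ1 : μb s ≤ 1 := by
      rw [← hμbsum]
      exact Finset.single_le_sum (fun i _ => (hμbpos i).le) (Finset.mem_univ s)
    have hπ1 : πb s a ≤ 1 := by
      rw [← (hπb.2 s)]
      exact Finset.single_le_sum (fun i _ => (hπb.1 s i)) (Finset.mem_univ a)
    calc μb s * πb s a ≤ 1 * πb s a :=
          mul_le_mul_of_nonneg_right hμ1 (hπbpos s a).le
      _ = πb s a := one_mul _
      _ ≤ 1 := hπ1
  calc |μb s * πb s a * γ * ∑ s', p s a s' * ∑ a', (π t₁ s' a' - π t₂ s' a') * Q s' a'|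
      = μb s * πb s a * γ * |∑ s', p s a s' * ∑ a', (π t₁ s' a' - π t₂ s' a') * Q s' a'| := by
        rw [abs_mul, abs_of_nonneg (mul_nonneg hd0 hγ0.le)]
    _ ≤ μb s * πb s a * γ * (2 * W * supNorm Q) := by
        refine mul_le_mul_of_nonneg_left ?_ (mul_nonneg hd0 hγ0.le)
        calc |∑ s', p s a s' * ∑ a', (π t₁ s' a' - π t₂ s' a') * Q s' a'|
            ≤ ∑ s', |p s a s' * ∑ a', (π t₁ s' a' - π t₂ s' a') * Q s' a'| :=
              Finset.abs_sum_le_sum_abs _ _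
          _ ≤ ∑ s', p s a s' * (2 * W * supNorm Q) := by
              refine Finset.sum_le_sum fun s' _ => ?_
              rw [abs_mul, abs_of_nonneg (hp.1 s a s')]
              exact mul_le_mul_of_nonneg_left (hinner s') (hp.1 s a s')
          _ = 2 * W * supNorm Q := by rw [← Finset.sum_mul, hp.2 s a, one_mul]
    _ ≤ 1 * (2 * W * supNorm Q) := by
        refine mul_le_mul_of_nonneg_right ?_
          (mul_nonneg (mul_nonneg (by norm_num) hW0) hQ0)
        calc μb s * πb s a * γ ≤ 1 * γ := mul_le_mul_of_nonneg_right hd1 hγ0.le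
          _ = γ := one_mul _
          _ ≤ 1 := hγ1.le
    _ = 2 * W * supNorm Q := one_mul _
end

section
/- Let {π_t} be a sequence of policies satisfying π_{t+1} = (1-ω_t)π_t + ω_t π̃_t for some policies π̃_t and stepsizes ω_t ∈ [0,1]. Then for all nonnegative integers t₁ < t₂, all y ∈ (S×A)², and all Q : S × A → ℝ, ‖F_IS(Q, y, π_{t₁}) − F_IS(Q, y, π_{t₂})‖∞ ≤ 2 (Σ_{u=t₁}^{t₂−1} ω_u) ‖Q‖∞ / π_{b,min}. -/
lemma pol_le_one {S A : Type*} [Fintype A] {π : S → A → ℝ} (hπ : IsPolicy π)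
    (s : S) (a : A) : π s a ≤ 1 := by
  have := Finset.single_le_sum (f := fun a => π s a) (fun i _ => hπ.1 s i) (Finset.mem_univ a)
  simpa [hπ.2 s] using this

/-- Policy-perturbation bound for the importance-sampling operator F_IS
(Lemma 3.2, part 4). -/
theorem FIS_policy_perturbation {S A : Type*} [Fintype S] [Fintype A] [Nonempty S] [Nonempty A]
    [DecidableEq S] [DecidableEq A]
    (p : S → A → S → ℝ) (hp : IsKernel p)
    (R : S → A → ℝ) (hR : ∀ s a, 0 ≤ R s a ∧ R s a ≤ 1)
    (γ : ℝ) (hγ : 0 < γ ∧ γ < 1)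
    (πb : S → A → ℝ) (hπb : IsPolicy πb) (hπbpos : ∀ s a, 0 < πb s a)
    (πbmin : ℝ)
    (hπbmin : πbmin = Finset.univ.inf' Finset.univ_nonempty (fun sa : S × A => πb sa.1 sa.2))
    (π πt : ℕ → S → A → ℝ) (ω : ℕ → ℝ)
    (hπ : ∀ t, IsPolicy (π t)) (hπt : ∀ t, IsPolicy (πt t))
    (hω : ∀ t, 0 ≤ ω t ∧ ω t ≤ 1)
    (hupd : ∀ t s a, π (t + 1) s a = (1 - ω t) * π t s a + ω t * πt t s a)
    (t₁ t₂ : ℕ) (h : t₁ < t₂) (y : (S × A) × S × A) (Q : S → A → ℝ) :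
    supNorm (fun s a => FIS R γ πb Q y (π t₁) s a - FIS R γ πb Q y (π t₂) s a)
      ≤ 2 * (∑ u ∈ Finset.Ico t₁ t₂, ω u) * supNorm Q / πbmin := by
  set s₂ := y.2.1
  set a₂ := y.2.2
  -- πbmin positive and ≤ each πb
  have hπbmin_pos : 0 < πbmin := by
    rw [hπbmin]
    apply Finset.lt_inf'_iff _ |>.2
    · exact fun sa _ => hπbpos sa.1 sa.2
  have hπbmin_le : πbmin ≤ πb s₂ a₂ := by
    rw [hπbmin]
    exact Finset.inf'_le _ (Finset.mem_univ (s₂, a₂))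
  -- supNorm Q bounds and nonneg
  have hQle : |Q s₂ a₂| ≤ supNorm Q :=
    Finset.le_sup' (fun sa : S × A => |Q sa.1 sa.2|) (Finset.mem_univ (s₂, a₂))
  have hQ0 : 0 ≤ supNorm Q := le_trans (abs_nonneg _) hQle
  have hω0 : 0 ≤ ∑ u ∈ Finset.Ico t₁ t₂, ω u :=
    Finset.sum_nonneg fun u _ => (hω u).1
  -- policy perturbation bound
  have key : ∀ t, t₁ ≤ t → |π t₁ s₂ a₂ - π t s₂ a₂| ≤ ∑ u ∈ Finset.Ico t₁ t, ω u := by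
    intro t ht
    induction t, ht using Nat.le_induction with
    | base => simp
    | succ n hn ih =>
      have hstep : |π n s₂ a₂ - π (n+1) s₂ a₂| ≤ ω n := by
        rw [hupd]
        have h1 : π n s₂ a₂ - ((1 - ω n) * π n s₂ a₂ + ω n * πt n s₂ a₂)
            = ω n * (π n s₂ a₂ - πt n s₂ a₂) := by ring
        rw [h1, abs_mul, abs_of_nonneg (hω n).1]
        have : |π n s₂ a₂ - πt n s₂ a₂| ≤ 1 := by
          rw [abs_sub_le_iff]
          constructor
          · linarith [pol_le_one (hπ n) s₂ a₂, (hπt n).1 s₂ a₂]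
          · linarith [pol_le_one (hπt n) s₂ a₂, (hπ n).1 s₂ a₂]
        nlinarith [(hω n).1]
      calc |π t₁ s₂ a₂ - π (n+1) s₂ a₂|
          ≤ |π t₁ s₂ a₂ - π n s₂ a₂| + |π n s₂ a₂ - π (n+1) s₂ a₂| := abs_sub_le _ _ _
        _ ≤ (∑ u ∈ Finset.Ico t₁ n, ω u) + ω n := add_le_add ih hstep
        _ = ∑ u ∈ Finset.Ico t₁ (n+1), ω u := by
            rw [Finset.sum_Ico_succ_top hn]
  have hkey := key t₂ h.le
  -- bound each component
  apply Finset.sup'_le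
  intro sa _
  by_cases hsa : (sa.1, sa.2) = y.1
  · simp only [FIS, hsa, eq_self_iff_true, if_true]
    have heq : R y.1.1 y.1.2 + γ * (π t₁ s₂ a₂ / πb s₂ a₂) * Q s₂ a₂ -
        (R y.1.1 y.1.2 + γ * (π t₂ s₂ a₂ / πb s₂ a₂) * Q s₂ a₂)
        = γ * ((π t₁ s₂ a₂ - π t₂ s₂ a₂) * Q s₂ a₂) / πb s₂ a₂ := by
      field_simp
      ring
    rw [heq, abs_div, abs_mul, abs_mul, abs_of_pos hγ.1,
      abs_of_pos (hπbpos s₂ a₂)]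
    have hnum : γ * (|π t₁ s₂ a₂ - π t₂ s₂ a₂| * |Q s₂ a₂|)
        ≤ (∑ u ∈ Finset.Ico t₁ t₂, ω u) * supNorm Q := by
      have h1 : |π t₁ s₂ a₂ - π t₂ s₂ a₂| * |Q s₂ a₂|
          ≤ (∑ u ∈ Finset.Ico t₁ t₂, ω u) * supNorm Q :=
        mul_le_mul hkey hQle (abs_nonneg _) hω0
      nlinarith [mul_nonneg (abs_nonneg (π t₁ s₂ a₂ - π t₂ s₂ a₂)) (abs_nonneg (Q s₂ a₂)), hγ.1, hγ.2]
    calc γ * (|π t₁ s₂ a₂ - π t₂ s₂ a₂| * |Q s₂ a₂|) / πb s₂ a₂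
        ≤ (∑ u ∈ Finset.Ico t₁ t₂, ω u) * supNorm Q / πbmin := by
          apply div_le_div₀ (by positivity) hnum hπbmin_pos hπbmin_le
      _ ≤ 2 * (∑ u ∈ Finset.Ico t₁ t₂, ω u) * supNorm Q / πbmin := by
          apply div_le_div_of_nonneg_right ?_ hπbmin_pos.le
          nlinarith
  · simp only [FIS, if_neg hsa, sub_self, abs_zero]
    positivity
end
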